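/- Let m ≥ n, let A ∈ ℝ^{m×n} have full rank n with columns a_j, and let γ ≥ 0. Suppose A + ΔA = Q R̂, where Q ∈ ℝ^{m×m} is orthogonal, R̂ ∈ ℝ^{m×n}, and ‖ΔA e_j‖₂ ≤ γ‖A e_j‖₂ for every column index j (e_j being the j-th standard basis vector). Then for every k with 1 ≤ k ≤ n, |σ_k(A) − σ_k(R̂)| ≤ √n·γ·κ₂ᴰ(A)·σ_k(A). -/

import Mathlib

open scoped BigOperators
open Matrix

/-- Euclidean norm of a vector in `ℝ^m`. -/
noncomputable def vecNorm {m : ℕ} (v : Fin m → ℝ) : ℝ :=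
  Real.sqrt (∑ i, v i ^ 2)

/-- The `k`-th largest singular value of a real `m × n` matrix
(`k = 0` gives the largest). -/
noncomputable def sval {m n : ℕ} (A : Matrix (Fin m) (Fin n) ℝ) (k : Fin n) : ℝ :=
  Real.sqrt
    (((Matrix.isHermitian_conjTranspose_mul_self A).eigenvalues ∘
      Tuple.sort (Matrix.isHermitian_conjTranspose_mul_self A).eigenvalues) k.rev)

/-- Spectral norm: the largest singular value. -/
noncomputable def specNorm {m n : ℕ} (A : Matrix (Fin m) (Fin n) ℝ) : ℝ :=
  ⨆ k, sval A k

/-- Smallest singular value. -/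
noncomputable def sMin {m n : ℕ} (A : Matrix (Fin m) (Fin n) ℝ) : ℝ :=
  ⨅ k, sval A k

/-- Frobenius norm. -/
noncomputable def frobNorm {m n : ℕ} (A : Matrix (Fin m) (Fin n) ℝ) : ℝ :=
  Real.sqrt (∑ i, ∑ j, (A i j) ^ 2)

/-- Frobenius norm of the off-diagonal part of a square matrix. -/
noncomputable def offF {n : ℕ} (M : Matrix (Fin n) (Fin n) ℝ) : ℝ :=
  frobNorm (M - Matrix.diagonal (fun i => M i i))

/-- Diagonal matrix of inverse column norms `D(A)`. -/
noncomputable def colScale {m n : ℕ} (A : Matrix (Fin m) (Fin n) ℝ) :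
    Matrix (Fin n) (Fin n) ℝ :=
  Matrix.diagonal (fun j => (vecNorm (fun i => A i j))⁻¹)

/-- Condition number `κ₂(A) = σ_max(A) / σ_min(A)`. -/
noncomputable def kappa2 {m n : ℕ} (A : Matrix (Fin m) (Fin n) ℝ) : ℝ :=
  specNorm A / sMin A

/-- One-sided scaled condition number `κ₂ᴰ(A) = κ₂(A · D(A))`. -/
noncomputable def scaledCond {m n : ℕ} (A : Matrix (Fin m) (Fin n) ℝ) : ℝ :=
  kappa2 (A * colScale A)

/-- Entrywise absolute value of a matrix. -/
def matAbs {m n : ℕ} (A : Matrix (Fin m) (Fin n) ℝ) : Matrix (Fin m) (Fin n) ℝ :=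
  fun i j => |A i j|

/-!
With `D = D(A)`, the columns of `ΔA * D` have norm at most `γ`, so for every `x`
`‖ΔA x‖ = ‖(ΔA D)(D⁻¹ x)‖ ≤ √n γ ‖D⁻¹ x‖ ≤ √n γ / σ_min(A D) · ‖A x‖ ≤ √n γ κ₂ᴰ(A) ‖A x‖`,
the last step because `A D` has unit columns and hence `σ_max(A D) ≥ 1`.
A relative bound `‖ΔA x‖ ≤ ε ‖A x‖` gives `(1 - ε) ‖A x‖ ≤ ‖(A + ΔA) x‖ ≤ (1 + ε) ‖A x‖`,
which the Courant–Fischer min-max principle transfers to every singular value.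
Finally `R̂` and `Q R̂ = A + ΔA` have the same Gram matrix, hence the same singular values.
-/

open scoped RealInnerProductSpace

theorem Submodule.exists_mem_inf_ne_zero_of_finrank_lt {K V : Type*} [DivisionRing K]
    [AddCommGroup V] [Module K V] [FiniteDimensional K V] (S T : Submodule K V)
    (h : Module.finrank K V < Module.finrank K S + Module.finrank K T) :
    ∃ x ∈ S ⊓ T, x ≠ 0 := by
  by_contra! hST
  exact h.not_ge <| Submodule.finrank_add_finrank_le_of_disjoint <|
    Submodule.disjoint_def.mpr fun x hxS hxT => hST x ⟨hxS, hxT⟩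

namespace OrthonormalBasis

variable {ι 𝕜 E : Type*} [Fintype ι] [RCLike 𝕜] [NormedAddCommGroup E] [InnerProductSpace 𝕜 E]
  (b : OrthonormalBasis ι 𝕜 E)

theorem inner_eq_zero_of_mem_span_image {s : Set ι} {x : E}
    (hx : x ∈ Submodule.span 𝕜 (b '' s)) {i : ι} (hi : i ∉ s) : inner 𝕜 (b i) x = 0 := by
  refine Submodule.span_induction ?_ (inner_zero_right _) (fun _ _ _ _ h h' => ?_)
    (fun _ _ _ h => ?_) hx
  · rintro _ ⟨j, hj, rfl⟩
    exact b.orthonormal.inner_eq_zero fun hij => hi (hij ▸ hj)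
  · rw [inner_add_right, h, h', add_zero]
  · rw [inner_smul_right, h, mul_zero]

theorem finrank_span_image (s : Finset ι) :
    Module.finrank 𝕜 (Submodule.span 𝕜 (b '' s)) = s.card := by
  rw [Set.image_eq_range]
  exact (finrank_span_eq_card (b.orthonormal.linearIndependent.comp _ Subtype.val_injective)).trans
    (by simp)

end OrthonormalBasis

namespace Matrix.IsHermitian

section Quadratic

variable {ι : Type*} [Fintype ι] [DecidableEq ι] {M : Matrix ι ι ℝ} (hM : M.IsHermitian)

theorem dotProduct_mulVec_eq_sum (x : EuclideanSpace ℝ ι) :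
    x.ofLp ⬝ᵥ M *ᵥ x.ofLp = ∑ i, hM.eigenvalues i * ⟪hM.eigenvectorBasis i, x⟫ ^ 2 := by
  set b := hM.eigenvectorBasis
  have hx : x.ofLp = ∑ i, ⟪b i, x⟫ • (b i).ofLp := by
    simpa [b.repr_apply_apply] using congrArg WithLp.ofLp (b.sum_repr x).symm
  have hdot : ∀ i, x.ofLp ⬝ᵥ (b i).ofLp = ⟪b i, x⟫ := fun i => by
    simp [EuclideanSpace.inner_eq_star_dotProduct]
  have hMb : ∀ i, M *ᵥ (b i).ofLp = hM.eigenvalues i • (b i).ofLp := hM.mulVec_eigenvectorBasis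
  nth_rewrite 2 [hx]
  simp only [mulVec_sum, mulVec_smul, hMb, dotProduct_sum, dotProduct_smul, hdot, smul_eq_mul]
  exact Finset.sum_congr rfl fun i _ => by ring

variable {hM} {x : EuclideanSpace ℝ ι} {t : ℝ}

theorem mul_norm_sq_le_dotProduct_mulVec
    (ht : ∀ i, ⟪hM.eigenvectorBasis i, x⟫ ≠ 0 → t ≤ hM.eigenvalues i) :
    t * ‖x‖ ^ 2 ≤ x.ofLp ⬝ᵥ M *ᵥ x.ofLp := by
  rw [hM.dotProduct_mulVec_eq_sum, ← hM.eigenvectorBasis.sum_sq_inner_right, Finset.mul_sum]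
  refine Finset.sum_le_sum fun i _ => ?_
  by_cases hi : ⟪hM.eigenvectorBasis i, x⟫ = 0
  · simp [hi]
  · exact mul_le_mul_of_nonneg_right (ht i hi) (sq_nonneg _)

theorem dotProduct_mulVec_le_mul_norm_sq
    (ht : ∀ i, ⟪hM.eigenvectorBasis i, x⟫ ≠ 0 → hM.eigenvalues i ≤ t) :
    x.ofLp ⬝ᵥ M *ᵥ x.ofLp ≤ t * ‖x‖ ^ 2 := by
  rw [hM.dotProduct_mulVec_eq_sum, ← hM.eigenvectorBasis.sum_sq_inner_right, Finset.mul_sum]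
  refine Finset.sum_le_sum fun i _ => ?_
  by_cases hi : ⟪hM.eigenvectorBasis i, x⟫ = 0
  · simp [hi]
  · exact mul_le_mul_of_nonneg_right (ht i hi) (sq_nonneg _)

end Quadratic

variable {n : ℕ} {M N : Matrix (Fin n) (Fin n) ℝ}

/-- The eigenvalues of `M` in increasing order. -/
noncomputable def sortedEigenvalues (hM : M.IsHermitian) : Fin n → ℝ :=
  hM.eigenvalues ∘ Tuple.sort hM.eigenvalues

/-- Courant–Fischer: the span of the eigenvectors of `N` for its top `n - j` eigenvalues meets the
span of those of `M` for its bottom `j + 1` eigenvalues, and a nonzero `x` in both separates the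
two `j`-th eigenvalues. -/
theorem sortedEigenvalues_le_mul (hM : M.IsHermitian) (hN : N.IsHermitian) {c : ℝ} (hc : 0 ≤ c)
    (h : ∀ x : Fin n → ℝ, x ⬝ᵥ N *ᵥ x ≤ c * (x ⬝ᵥ M *ᵥ x)) (j : Fin n) :
    hN.sortedEigenvalues j ≤ c * hM.sortedEigenvalues j := by
  set σ := Tuple.sort hN.eigenvalues
  set τ := Tuple.sort hM.eigenvalues
  set S := Submodule.span ℝ (hN.eigenvectorBasis '' ((Finset.Ici j).image σ : Finset _))
  set T := Submodule.span ℝ (hM.eigenvectorBasis '' ((Finset.Iic j).image τ : Finset _))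
  obtain ⟨x, ⟨hxS, hxT⟩, hx0⟩ := Submodule.exists_mem_inf_ne_zero_of_finrank_lt S T <| by
    simp only [S, T, OrthonormalBasis.finrank_span_image, finrank_euclideanSpace_fin,
      Finset.card_image_of_injective _ (Equiv.injective _), Fin.card_Ici, Fin.card_Iic]
    omega
  have hmem {s : Finset (Fin n)} {b : OrthonormalBasis (Fin n) ℝ (EuclideanSpace ℝ (Fin n))}
      (hx : x ∈ Submodule.span ℝ (b '' s)) {i} (hi : ⟪b i, x⟫ ≠ 0) : i ∈ s :=
    by_contra fun h => hi (b.inner_eq_zero_of_mem_span_image hx h)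
  have hlow : hN.sortedEigenvalues j * ‖x‖ ^ 2 ≤ x.ofLp ⬝ᵥ N *ᵥ x.ofLp :=
    mul_norm_sq_le_dotProduct_mulVec fun i hi => by
      obtain ⟨l, hl, rfl⟩ := Finset.mem_image.mp (hmem hxS hi)
      exact Tuple.monotone_sort hN.eigenvalues (Finset.mem_Ici.mp hl)
  have hup : x.ofLp ⬝ᵥ M *ᵥ x.ofLp ≤ hM.sortedEigenvalues j * ‖x‖ ^ 2 :=
    dotProduct_mulVec_le_mul_norm_sq fun i hi => by
      obtain ⟨l, hl, rfl⟩ := Finset.mem_image.mp (hmem hxT hi)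
      exact Tuple.monotone_sort hM.eigenvalues (Finset.mem_Iic.mp hl)
  have hx : 0 < ‖x‖ ^ 2 := by positivity
  nlinarith [h x.ofLp, mul_le_mul_of_nonneg_left hup hc]

end Matrix.IsHermitian

theorem Matrix.mulVec_injective_of_rank_eq_card {K : Type*} [Field K] {p q : Type*} [Fintype q]
    {A : Matrix p q K} (h : A.rank = Fintype.card q) : Function.Injective A.mulVec :=
  mulVec_injective_iff.mpr <| linearIndependent_iff_card_eq_finrank_span.mpr <|
    h.symm.trans A.rank_eq_finrank_span_cols

section VecNorm

variable {m : ℕ}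

theorem vecNorm_nonneg (v : Fin m → ℝ) : 0 ≤ vecNorm v := Real.sqrt_nonneg _

theorem vecNorm_sq (v : Fin m → ℝ) : vecNorm v ^ 2 = ∑ i, v i ^ 2 :=
  Real.sq_sqrt (by positivity)

theorem vecNorm_eq_norm (v : Fin m → ℝ) : vecNorm v = ‖WithLp.toLp 2 v‖ := by
  simp [vecNorm, EuclideanSpace.norm_eq]

theorem vecNorm_eq_zero {v : Fin m → ℝ} : vecNorm v = 0 ↔ v = 0 := by
  simp [vecNorm_eq_norm]

theorem vecNorm_smul (c : ℝ) (v : Fin m → ℝ) : vecNorm (c • v) = |c| * vecNorm v := by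
  simp [vecNorm_eq_norm, norm_smul]

theorem abs_vecNorm_sub_vecNorm_le (u v : Fin m → ℝ) :
    |vecNorm u - vecNorm v| ≤ vecNorm (u - v) := by
  simpa [vecNorm_eq_norm] using abs_norm_sub_norm_le (WithLp.toLp 2 u) (WithLp.toLp 2 v)

end VecNorm

section SingularValues

variable {m n : ℕ}

theorem dotProduct_conjTranspose_mul_self_mulVec (B : Matrix (Fin m) (Fin n) ℝ) (x : Fin n → ℝ) :
    x ⬝ᵥ (Bᴴ * B) *ᵥ x = vecNorm (B *ᵥ x) ^ 2 := by
  rw [vecNorm_sq, ← mulVec_mulVec, dotProduct_mulVec, conjTranspose_eq_transpose_of_trivial,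
    vecMul_transpose]
  simp [dotProduct, sq]

theorem sval_eq_sqrt_sortedEigenvalues (B : Matrix (Fin m) (Fin n) ℝ) (k : Fin n) :
    sval B k = √((isHermitian_conjTranspose_mul_self B).sortedEigenvalues k.rev) :=
  rfl

theorem sval_nonneg (B : Matrix (Fin m) (Fin n) ℝ) (k : Fin n) : 0 ≤ sval B k :=
  Real.sqrt_nonneg _

theorem specNorm_nonneg (B : Matrix (Fin m) (Fin n) ℝ) : 0 ≤ specNorm B :=
  Real.iSup_nonneg (sval_nonneg B)

theorem sMin_nonneg (B : Matrix (Fin m) (Fin n) ℝ) : 0 ≤ sMin B :=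
  Real.iInf_nonneg (sval_nonneg B)

theorem scaledCond_nonneg (A : Matrix (Fin m) (Fin n) ℝ) : 0 ≤ scaledCond A :=
  div_nonneg (specNorm_nonneg _) (sMin_nonneg _)

theorem exists_sval_eq_sqrt_eigenvalues (B : Matrix (Fin m) (Fin n) ℝ) (i : Fin n) :
    ∃ k, sval B k = √((isHermitian_conjTranspose_mul_self B).eigenvalues i) :=
  ⟨((Tuple.sort (isHermitian_conjTranspose_mul_self B).eigenvalues).symm i).rev, by
    simp [sval_eq_sqrt_sortedEigenvalues, IsHermitian.sortedEigenvalues]⟩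

theorem sMin_le_sqrt_eigenvalues (B : Matrix (Fin m) (Fin n) ℝ) (i : Fin n) :
    sMin B ≤ √((isHermitian_conjTranspose_mul_self B).eigenvalues i) := by
  obtain ⟨k, hk⟩ := exists_sval_eq_sqrt_eigenvalues B i
  exact hk ▸ ciInf_le (Set.finite_range _).bddBelow k

theorem sqrt_eigenvalues_le_specNorm (B : Matrix (Fin m) (Fin n) ℝ) (i : Fin n) :
    √((isHermitian_conjTranspose_mul_self B).eigenvalues i) ≤ specNorm B := by
  obtain ⟨k, hk⟩ := exists_sval_eq_sqrt_eigenvalues B i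
  exact hk ▸ le_ciSup (Set.finite_range _).bddAbove k

theorem sMin_mul_vecNorm_le (B : Matrix (Fin m) (Fin n) ℝ) (y : Fin n → ℝ) :
    sMin B * vecNorm y ≤ vecNorm (B *ᵥ y) := by
  have hB := isHermitian_conjTranspose_mul_self B
  have hsq : ∀ i, sMin B ^ 2 ≤ hB.eigenvalues i := fun i => by
    have := pow_le_pow_left₀ (sMin_nonneg B) (sMin_le_sqrt_eigenvalues B i) 2
    rwa [Real.sq_sqrt (eigenvalues_conjTranspose_mul_self_nonneg B i)] at this
  have := hB.mul_norm_sq_le_dotProduct_mulVec (x := WithLp.toLp 2 y) fun i _ => hsq i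
  rw [← vecNorm_eq_norm, WithLp.ofLp_toLp, dotProduct_conjTranspose_mul_self_mulVec] at this
  exact (pow_le_pow_iff_left₀ (mul_nonneg (sMin_nonneg B) (vecNorm_nonneg y)) (vecNorm_nonneg _)
    two_ne_zero).mp (by rwa [mul_pow])

theorem vecNorm_mulVec_le_specNorm_mul (B : Matrix (Fin m) (Fin n) ℝ) (y : Fin n → ℝ) :
    vecNorm (B *ᵥ y) ≤ specNorm B * vecNorm y := by
  have hB := isHermitian_conjTranspose_mul_self B
  have hsq : ∀ i, hB.eigenvalues i ≤ specNorm B ^ 2 := fun i => by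
    have := pow_le_pow_left₀ (Real.sqrt_nonneg _) (sqrt_eigenvalues_le_specNorm B i) 2
    rwa [Real.sq_sqrt (eigenvalues_conjTranspose_mul_self_nonneg B i)] at this
  have := hB.dotProduct_mulVec_le_mul_norm_sq (x := WithLp.toLp 2 y) fun i _ => hsq i
  rw [← vecNorm_eq_norm, WithLp.ofLp_toLp, dotProduct_conjTranspose_mul_self_mulVec] at this
  exact (pow_le_pow_iff_left₀ (vecNorm_nonneg _)
    (mul_nonneg (specNorm_nonneg B) (vecNorm_nonneg y)) two_ne_zero).mp (by rwa [mul_pow])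

theorem sMin_pos [Nonempty (Fin n)] {B : Matrix (Fin m) (Fin n) ℝ}
    (hB : Function.Injective B.mulVec) : 0 < sMin B := by
  obtain ⟨k, hk⟩ := exists_eq_ciInf_of_finite (f := sval B)
  rw [sMin, ← hk]
  exact Real.sqrt_pos.mpr ((PosDef.conjTranspose_mul_self B hB).eigenvalues_pos _)

theorem sval_le_mul_sval {B C : Matrix (Fin m) (Fin n) ℝ} {c : ℝ} (hc : 0 ≤ c)
    (h : ∀ x, vecNorm (C *ᵥ x) ≤ c * vecNorm (B *ᵥ x)) (k : Fin n) :
    sval C k ≤ c * sval B k := by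
  have := (isHermitian_conjTranspose_mul_self B).sortedEigenvalues_le_mul
    (isHermitian_conjTranspose_mul_self C) (sq_nonneg c) (fun x => by
      rw [dotProduct_conjTranspose_mul_self_mulVec, dotProduct_conjTranspose_mul_self_mulVec,
        ← mul_pow]
      exact pow_le_pow_left₀ (vecNorm_nonneg _) (h x) 2) k.rev
  rw [sval_eq_sqrt_sortedEigenvalues, sval_eq_sqrt_sortedEigenvalues, ← Real.sqrt_sq hc,
    ← Real.sqrt_mul (sq_nonneg c)]
  exact Real.sqrt_le_sqrt this

theorem sval_eq_of_conjTranspose_mul_self_eq {p : ℕ} {B : Matrix (Fin m) (Fin n) ℝ}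
    {C : Matrix (Fin p) (Fin n) ℝ} (h : Bᴴ * B = Cᴴ * C) : sval B = sval C := by
  have key : ∀ {M N : Matrix (Fin n) (Fin n) ℝ} (hM : M.IsHermitian) (hN : N.IsHermitian),
      M = N → hM.sortedEigenvalues = hN.sortedEigenvalues := by
    rintro _ _ _ _ rfl; rfl
  funext k
  rw [sval_eq_sqrt_sortedEigenvalues, sval_eq_sqrt_sortedEigenvalues,
    key (isHermitian_conjTranspose_mul_self B) (isHermitian_conjTranspose_mul_self C) h]

theorem sval_mul_of_transpose_mul_self_eq_one {p : ℕ} {Q : Matrix (Fin p) (Fin m) ℝ}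
    (hQ : Qᵀ * Q = 1) (R : Matrix (Fin m) (Fin n) ℝ) : sval (Q * R) = sval R :=
  sval_eq_of_conjTranspose_mul_self_eq <| by
    rw [conjTranspose_mul, conjTranspose_eq_transpose_of_trivial Q, Matrix.mul_assoc,
      ← Matrix.mul_assoc Qᵀ, hQ, Matrix.one_mul]

theorem abs_sval_add_sub_sval_le {B E : Matrix (Fin m) (Fin n) ℝ} {ε : ℝ} (hε : 0 ≤ ε)
    (h : ∀ x, vecNorm (E *ᵥ x) ≤ ε * vecNorm (B *ᵥ x)) (k : Fin n) :
    |sval (B + E) k - sval B k| ≤ ε * sval B k := by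
  have hdiff : ∀ x, |vecNorm ((B + E) *ᵥ x) - vecNorm (B *ᵥ x)| ≤ ε * vecNorm (B *ᵥ x) :=
    fun x => by
      have := abs_vecNorm_sub_vecNorm_le (B *ᵥ x + E *ᵥ x) (B *ᵥ x)
      rw [add_sub_cancel_left] at this
      exact add_mulVec B E x ▸ this.trans (h x)
  have hup : sval (B + E) k ≤ (1 + ε) * sval B k :=
    sval_le_mul_sval (by linarith) (fun x => by linarith [(abs_le.mp (hdiff x)).2]) k
  refine abs_le.mpr ⟨?_, by linarith⟩
  rcases le_or_gt 1 ε with hε1 | hε1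
  · nlinarith [sval_nonneg (B + E) k, sval_nonneg B k]
  · have hlow : sval B k ≤ (1 - ε)⁻¹ * sval (B + E) k :=
      sval_le_mul_sval (inv_nonneg.mpr (by linarith)) (fun x => by
        rw [le_inv_mul_iff₀ (by linarith)]
        linarith [(abs_le.mp (hdiff x)).1]) k
    rw [le_inv_mul_iff₀ (by linarith)] at hlow
    linarith

end SingularValues

section ColumnScaling

variable {m n : ℕ}

theorem vecNorm_mulVec_le_frobNorm_mul (C : Matrix (Fin m) (Fin n) ℝ) (y : Fin n → ℝ) :
    vecNorm (C *ᵥ y) ≤ frobNorm C * vecNorm y := by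
  rw [vecNorm, vecNorm, frobNorm, ← Real.sqrt_mul (by positivity), Finset.sum_mul]
  exact Real.sqrt_le_sqrt <| Finset.sum_le_sum fun i _ =>
    Finset.sum_mul_sq_le_sq_mul_sq Finset.univ (C i) y

theorem frobNorm_le_of_vecNorm_col_le {C : Matrix (Fin m) (Fin n) ℝ} {c : ℝ} (hc : 0 ≤ c)
    (h : ∀ j, vecNorm (fun i => C i j) ≤ c) : frobNorm C ≤ √n * c := by
  rw [frobNorm, ← Real.sqrt_sq hc, ← Real.sqrt_mul n.cast_nonneg, Finset.sum_comm]
  refine Real.sqrt_le_sqrt ?_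
  calc ∑ j, ∑ i, C i j ^ 2 = ∑ j, vecNorm (fun i => C i j) ^ 2 := by simp only [vecNorm_sq]
    _ ≤ ∑ _j : Fin n, c ^ 2 :=
        Finset.sum_le_sum fun j _ => pow_le_pow_left₀ (vecNorm_nonneg _) (h j) 2
    _ = n * c ^ 2 := by simp

theorem colScale_mulVec (A : Matrix (Fin m) (Fin n) ℝ) (y : Fin n → ℝ) :
    colScale A *ᵥ y = fun j => (vecNorm fun i => A i j)⁻¹ * y j :=
  funext (mulVec_diagonal _ _)

theorem vecNorm_col_mul_colScale (A B : Matrix (Fin m) (Fin n) ℝ) (j : Fin n) :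
    vecNorm (fun i => (B * colScale A) i j) =
      vecNorm (fun i => B i j) / vecNorm (fun i => A i j) := by
  have : (fun i => (B * colScale A) i j) = (vecNorm fun i => A i j)⁻¹ • fun i => B i j := by
    ext i; simp [colScale, mul_comm]
  rw [this, vecNorm_smul, abs_inv, abs_of_nonneg (vecNorm_nonneg _), inv_mul_eq_div]

theorem vecNorm_col_ne_zero {A : Matrix (Fin m) (Fin n) ℝ} (hA : Function.Injective A.mulVec)
    (j : Fin n) : vecNorm (fun i => A i j) ≠ 0 := by
  rw [Ne, vecNorm_eq_zero]
  intro h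
  have := @hA (Pi.single j 1) 0 (by rw [mulVec_single_one, mulVec_zero]; exact h)
  simpa using congrFun this j

theorem mul_colScale_mulVec_colNorm_mul {A : Matrix (Fin m) (Fin n) ℝ}
    (hA : ∀ j, vecNorm (fun i => A i j) ≠ 0) (B : Matrix (Fin m) (Fin n) ℝ) (x : Fin n → ℝ) :
    (B * colScale A) *ᵥ (fun j => vecNorm (fun i => A i j) * x j) = B *ᵥ x := by
  rw [← mulVec_mulVec, colScale_mulVec]
  congr 1
  ext j
  field_simp [hA j]

theorem injective_mulVec_mul_colScale {A : Matrix (Fin m) (Fin n) ℝ}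
    (hA : Function.Injective A.mulVec) : Function.Injective (A * colScale A).mulVec := by
  have hD : Function.Injective (colScale A).mulVec := fun y z hyz => funext fun j =>
    mul_left_cancel₀ (inv_ne_zero (vecNorm_col_ne_zero hA j)) <| by
      simpa [colScale_mulVec] using congrFun hyz j
  simpa [Function.comp_def, mulVec_mulVec] using hA.comp hD

theorem one_le_specNorm_mul_colScale [Nonempty (Fin n)] {A : Matrix (Fin m) (Fin n) ℝ}
    (hA : Function.Injective A.mulVec) : 1 ≤ specNorm (A * colScale A) := by
  let j : Fin n := Classical.arbitrary _
  have := vecNorm_mulVec_le_specNorm_mul (A * colScale A) (Pi.single j 1)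
  have hcol : (A * colScale A) *ᵥ Pi.single j 1 = fun i => (A * colScale A) i j :=
    mulVec_single_one _ _
  have hunit : vecNorm (Pi.single j (1 : ℝ)) = 1 := by simp [vecNorm_eq_norm]
  rwa [hcol, vecNorm_col_mul_colScale, div_self (vecNorm_col_ne_zero hA j), hunit,
    mul_one] at this

theorem vecNorm_mulVec_le_scaledCond_mul [Nonempty (Fin n)] {A ΔA : Matrix (Fin m) (Fin n) ℝ}
    (hA : Function.Injective A.mulVec) {γ : ℝ} (hγ : 0 ≤ γ)
    (hcols : ∀ j, vecNorm (fun i => ΔA i j) ≤ γ * vecNorm (fun i => A i j)) (x : Fin n → ℝ) :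
    vecNorm (ΔA *ᵥ x) ≤ √n * γ * scaledCond A * vecNorm (A *ᵥ x) := by
  have hcol := vecNorm_col_ne_zero hA
  set y : Fin n → ℝ := fun j => vecNorm (fun i => A i j) * x j
  have hsMin := sMin_pos (injective_mulVec_mul_colScale hA)
  have hfrob : frobNorm (ΔA * colScale A) ≤ √n * γ := frobNorm_le_of_vecNorm_col_le hγ fun j => by
    rw [vecNorm_col_mul_colScale, div_le_iff₀ ((vecNorm_nonneg _).lt_of_ne' (hcol j))]
    exact hcols j
  have hy : sMin (A * colScale A) * vecNorm y ≤ vecNorm (A *ᵥ x) :=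
    mul_colScale_mulVec_colNorm_mul hcol A x ▸ sMin_mul_vecNorm_le _ y
  calc vecNorm (ΔA *ᵥ x) = vecNorm ((ΔA * colScale A) *ᵥ y) := by
        rw [mul_colScale_mulVec_colNorm_mul hcol]
    _ ≤ √n * γ * vecNorm y :=
        (vecNorm_mulVec_le_frobNorm_mul _ _).trans
          (mul_le_mul_of_nonneg_right hfrob (vecNorm_nonneg _))
    _ ≤ √n * γ * (specNorm (A * colScale A) * vecNorm y) :=
        mul_le_mul_of_nonneg_left (le_mul_of_one_le_left (vecNorm_nonneg _)
          (one_le_specNorm_mul_colScale hA)) (by positivity)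
    _ = √n * γ * scaledCond A * (sMin (A * colScale A) * vecNorm y) := by
        rw [scaledCond, kappa2]
        field_simp
    _ ≤ √n * γ * scaledCond A * vecNorm (A *ᵥ x) :=
        mul_le_mul_of_nonneg_left hy (by have := scaledCond_nonneg A; positivity)

end ColumnScaling

theorem qr_singular_value_perturbation_general
    {m n : ℕ}
    (A : Matrix (Fin m) (Fin n) ℝ) (hrank : A.rank = n)
    (γ : ℝ) (hγ : 0 ≤ γ)
    (ΔA : Matrix (Fin m) (Fin n) ℝ)
    (Q : Matrix (Fin m) (Fin m) ℝ) (R : Matrix (Fin m) (Fin n) ℝ)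
    (hQ : Qᵀ * Q = 1)
    (hfact : A + ΔA = Q * R)
    (hcols : ∀ j, vecNorm (fun i => ΔA i j) ≤ γ * vecNorm (fun i => A i j)) :
    ∀ k : Fin n, |sval A k - sval R k| ≤
      Real.sqrt n * γ * scaledCond A * sval A k := by
  intro k
  have : Nonempty (Fin n) := ⟨k⟩
  have hA : Function.Injective A.mulVec :=
    Matrix.mulVec_injective_of_rank_eq_card (by rwa [Fintype.card_fin])
  have hε : 0 ≤ √n * γ * scaledCond A := by have := scaledCond_nonneg A; positivity
  rw [← sval_mul_of_transpose_mul_self_eq_one hQ R, ← hfact, abs_sub_comm]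
  exact abs_sval_add_sub_sval_le hε (vecNorm_mulVec_le_scaledCond_mul hA hγ hcols) k

/-- Singular value perturbation under a backward-stable QR factorization
(part of Proposition 4.1 / equation (4.3)). -/
theorem qr_singular_value_perturbation
    {m n : ℕ} (hmn : n ≤ m)
    (A : Matrix (Fin m) (Fin n) ℝ) (hrank : A.rank = n)
    (γ : ℝ) (hγ : 0 ≤ γ)
    (ΔA : Matrix (Fin m) (Fin n) ℝ)
    (Q : Matrix (Fin m) (Fin m) ℝ) (R : Matrix (Fin m) (Fin n) ℝ)
    (hQ : Qᵀ * Q = 1)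
    (hfact : A + ΔA = Q * R)
    (hcols : ∀ j, vecNorm (fun i => ΔA i j) ≤ γ * vecNorm (fun i => A i j)) :
    ∀ k : Fin n, |sval A k - sval R k| ≤
      Real.sqrt n * γ * scaledCond A * sval A k :=
  qr_singular_value_perturbation_general A hrank γ hγ ΔA Q R hQ hfact hcols
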